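/- Let (D, ≤, u) be a dimension group of rank at least 3 whose maximal divisible subgroup is ℚu, on which a group H acts by order-preserving group automorphisms, such that the induced map H → Aut(D/ℚu) together with −1 gives an isomorphism Aut(D/ℚu) ≅ (ℤ/2ℤ) × H (with ℤ/2ℤ generated by the automorphism −1 of D/ℚu). Then the group of order-preserving automorphisms of D is exactly the image of H: every order-preserving automorphism of D is given by the action of a unique element of H. -/

import Mathlib

/-!
An order automorphism `Φ` preserves the maximal divisible subgroup `ℚu`, so modulo `ℚu` it is
`±ρ g` for some `g ∈ H`, and `Θ = (ρ g)⁻¹ Φ` is an order automorphism with `Θ z ∓ z ∈ ℚu`.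
Every `z` has a rational floor `q z`, the largest `q` with `q u ≤ z` (a minimum of coordinate
ratios in a simplicial subgroup). If `Θ u = s u` then `q (Θ z) = s q z`, so `Θ` multiplies the
width `q z + q (-z)` by `s`; as `Θ z ≡ ±z` the width is also unchanged, and it vanishes only on
`ℚu ≠ D`, so `s = 1`. In the `+` case `q (Θ z) = q z` then forces `Θ z = z`. In the `-` case, in a
simplicial subgroup `ℤᵏ ∋ u` with basis `εⱼ`, the floors `q εⱼ = 0` and `q (-εⱼ) = -1/uⱼ` give
`uⱼ (Θ εⱼ + εⱼ) = u`; summing over `j` yields `2u = Θ u + u = k u`, so `k = 2`, against rank `≥ 3`.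
-/

/-- `q • u ≥ d` for a rational `q`, interpreted by clearing denominators: for every
representation `q = a / b` with `b > 0` we have `b • d ≤ a • u`. -/
def ratGe {D : Type*} [AddCommGroup D] [PartialOrder D] (u d : D) (q : ℚ) : Prop :=
  ∀ a b : ℤ, 0 < b → q = (a : ℚ) / (b : ℚ) → b • d ≤ a • u

/-- `q • u ≤ d` for a rational `q`, interpreted by clearing denominators. -/
def ratLe {D : Type*} [AddCommGroup D] [PartialOrder D] (u d : D) (q : ℚ) : Prop :=
  ∀ a b : ℤ, 0 < b → q = (a : ℚ) / (b : ℚ) → a • u ≤ b • d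

/-- A dimension group: a countable partially ordered abelian group (translation
invariant order) with order unit `u`, in which every finite subset is contained in a
subgroup order-isomorphic to a finite direct power of `(ℤ, ≤)`. -/
structure IsDimensionGroup (D : Type*) [AddCommGroup D] [PartialOrder D] (u : D) : Prop where
  add_le_add : ∀ a b c : D, a ≤ b → a + c ≤ b + c
  countable : Countable D
  unit_nonneg : 0 ≤ u
  unit_arch : ∀ x : D, ∃ n : ℕ, 0 < n ∧ x ≤ (n : ℤ) • u
  locallyZ : ∀ s : Finset D, ∃ (k : ℕ) (S : AddSubgroup D) (e : S ≃+ (Fin k → ℤ)),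
    (∀ x ∈ s, x ∈ S) ∧ ∀ a b : S, a ≤ b ↔ e a ≤ e b
/-- A subgroup is divisible if each of its elements is divisible, inside the
subgroup, by every nonzero integer. -/
def DivisibleSubgroup {D : Type*} [AddCommGroup D] (Q : AddSubgroup D) : Prop :=
  ∀ x ∈ Q, ∀ n : ℤ, n ≠ 0 → ∃ y ∈ Q, n • y = x

/-- The multiplicative group structure on `AddAut A` (composition), as in the older Mathlib. -/
instance addAutGroupOld {A : Type*} [Add A] : Group (AddAut A) where
  mul g h := AddEquiv.trans h g
  one := AddEquiv.refl _
  inv := AddEquiv.symm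
  mul_assoc _ _ _ := rfl
  one_mul _ := rfl
  mul_one _ := rfl
  inv_mul_cancel := AddEquiv.self_trans_symm

section

variable {D : Type*} [AddCommGroup D]

def rationalMultiples (u : D) : AddSubgroup D where
  carrier := {x | ∃ a b : ℤ, 0 < b ∧ b • x = a • u}
  zero_mem' := ⟨0, 1, one_pos, by simp⟩
  add_mem' := by
    rintro x y ⟨a, b, hb, hx⟩ ⟨a', b', hb', hy⟩
    exact ⟨a * b' + a' * b, b * b', mul_pos hb hb',
      by linear_combination (norm := module) b' • hx + b • hy⟩
  neg_mem' := by
    rintro x ⟨a, b, hb, hx⟩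
    exact ⟨-a, b, hb, by rw [smul_neg, hx, neg_smul]⟩

theorem not_linearIndependent_of_mem_rationalMultiples {u x y : D}
    (hx : x ∈ rationalMultiples u) (hy : y ∈ rationalMultiples u) :
    ¬ LinearIndependent ℤ ![x, y] := by
  obtain ⟨a, b, hb, hx⟩ := hx
  obtain ⟨a', b', hb', hy⟩ := hy
  rw [LinearIndependent.pair_iff]
  push Not
  by_cases ha : a = 0
  · exact ⟨b, 0, by simp [hx, ha], fun hb0 => absurd hb0 hb.ne'⟩
  · refine ⟨a' * b, -(a * b'), ?_, fun _ => neg_ne_zero.2 (mul_ne_zero ha hb'.ne')⟩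
    linear_combination (norm := module) a' • hx - a • hy

theorem exists_not_mem_rationalMultiples {ι : Type*} [Nontrivial ι] {f : ι → D}
    (hf : LinearIndependent ℤ f) (u : D) : ∃ z, z ∉ rationalMultiples u := by
  obtain ⟨i, j, hij⟩ := exists_pair_ne ι
  by_contra! hall
  refine not_linearIndependent_of_mem_rationalMultiples (hall (f i)) (hall (f j)) ?_
  convert hf.comp ![i, j] fun a b hab => ?_ using 1
  · ext l
    fin_cases l <;> rfl
  · fin_cases a <;> fin_cases b <;> simp_all [eq_comm]

theorem card_le_of_linearIndependent {ι : Type*} [Fintype ι] {f : ι → D}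
    (hf : LinearIndependent ℤ f) {S : AddSubgroup D} {k : ℕ} (e : S ≃+ (Fin k → ℤ))
    (hfS : ∀ i, f i ∈ S) : Fintype.card ι ≤ k := by
  have hS : LinearIndependent ℤ (fun i => (⟨f i, hfS i⟩ : S)) :=
    LinearIndependent.of_comp S.subtype.toIntLinearMap hf
  simpa using (hS.map' e.toIntLinearEquiv.toLinearMap
    e.toIntLinearEquiv.ker).fintype_card_le_finrank

theorem coe_eq_sum_chart_basis {S : AddSubgroup D} {k : ℕ} (e : S ≃+ (Fin k → ℤ)) (v : S) :
    (v : D) = ∑ j, e v j • ((e.symm (Pi.single j 1) : S) : D) := by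
  have : v = ∑ j, e v j • e.symm (Pi.single j 1) := e.injective <| by
    ext i
    simp [map_sum, map_zsmul, Pi.single_apply]
  simpa using congrArg Subtype.val this

theorem DivisibleSubgroup.map {D' : Type*} [AddCommGroup D'] {Q : AddSubgroup D}
    (hQ : DivisibleSubgroup Q) (f : D →+ D') : DivisibleSubgroup (Q.map f) := by
  rintro _ ⟨x, hx, rfl⟩ n hn
  obtain ⟨y, hy, rfl⟩ := hQ x hx n hn
  exact ⟨f y, Q.mem_map_of_mem f hy, (map_zsmul f n y).symm⟩

section Maximal

variable {Q : AddSubgroup D} (hQ : DivisibleSubgroup Q)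
  (hmax : ∀ Q' : AddSubgroup D, DivisibleSubgroup Q' → Q' ≤ Q)
include hQ hmax

theorem DivisibleSubgroup.apply_mem_of_maximal (Ψ : D ≃+ D) {x : D} (hx : x ∈ Q) : Ψ x ∈ Q :=
  hmax _ (hQ.map (Ψ : D →+ D)) (Q.mem_map_of_mem _ hx)

theorem DivisibleSubgroup.map_eq_of_maximal (Ψ : D ≃+ D) : Q.map (Ψ : D →+ D) = Q :=
  le_antisymm (hmax _ (hQ.map _)) fun x hx =>
    ⟨Ψ.symm x, hQ.apply_mem_of_maximal hmax Ψ.symm hx, Ψ.apply_symm_apply x⟩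

end Maximal

section Order

variable [PartialOrder D] {u : D}

/-- `q` is the largest rational with `q • u ≤ z`; denominators are cleared because `D` need not
be divisible. -/
def IsRatFloor (u z : D) (q : ℚ) : Prop :=
  ∀ a b : ℤ, 0 < b → (a • u ≤ b • z ↔ (a : ℚ) / b ≤ q)

theorem IsRatFloor.unique {z : D} {q q' : ℚ} (hq : IsRatFloor u z q)
    (hq' : IsRatFloor u z q') : q = q' := by
  have key (r : ℚ) : r ≤ q ↔ r ≤ q' := by
    have hr : (0 : ℤ) < r.den := by exact_mod_cast r.pos
    simpa [Rat.num_div_den] using (hq r.num r.den hr).symm.trans (hq' r.num r.den hr)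
  exact le_antisymm ((key q).1 le_rfl) ((key q').2 le_rfl)

theorem IsRatFloor.mem_rationalMultiples [IsOrderedAddMonoid D] {z : D} {q : ℚ}
    (hq : IsRatFloor u z q) (hq' : IsRatFloor u (-z) (-q)) : z ∈ rationalMultiples u := by
  have hden : (0 : ℤ) < q.den := by exact_mod_cast q.pos
  refine ⟨q.num, q.den, hden, le_antisymm ?_ ?_⟩
  · have := (hq' (-q.num) q.den hden).2 (by push_cast; rw [neg_div, Rat.num_div_den])
    rwa [neg_zsmul, zsmul_neg, neg_le_neg_iff] at this
  · exact (hq q.num q.den hden).2 (by rw [Int.cast_natCast, Rat.num_div_den])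

/-! A chart is a subgroup `S` with an order isomorphism `e : S ≃+ ℤᵏ`, as in
`IsDimensionGroup.locallyZ`; `e.symm (Pi.single j 1)` is its `j`-th basis vector. -/

section Chart

variable {S : AddSubgroup D} {k : ℕ} {e : S ≃+ (Fin k → ℤ)}
  (he : ∀ a b : S, a ≤ b ↔ e a ≤ e b)
include he

theorem zsmul_le_zsmul_iff_of_chart (v w : S) (a b : ℤ) :
    a • (v : D) ≤ b • (w : D) ↔ ∀ i, a * e v i ≤ b * e w i := by
  rw [← AddSubgroup.coe_zsmul, ← AddSubgroup.coe_zsmul, Subtype.coe_le_coe, he,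
    map_zsmul, map_zsmul]
  rfl

theorem isRatFloor_of_chart {v w : S} (hv : ∀ i, 0 < e v i) {q : ℚ}
    (hle : ∀ i, q * e v i ≤ e w i) (hex : ∃ i, q * e v i = e w i) :
    IsRatFloor (v : D) w q := by
  intro a b hb
  have hbq : (0 : ℚ) < b := by exact_mod_cast hb
  rw [zsmul_le_zsmul_iff_of_chart he, div_le_iff₀ hbq]
  constructor
  · obtain ⟨j, hj⟩ := hex
    intro hab
    have hvj : (0 : ℚ) < e v j := by exact_mod_cast hv j
    have : (a : ℚ) * e v j ≤ b * (q * e v j) := by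
      rw [hj]
      exact_mod_cast hab j
    exact le_of_mul_le_mul_right (this.trans_eq (by ring)) hvj
  · intro hab i
    have hvi : (0 : ℚ) < e v i := by exact_mod_cast hv i
    have : (a : ℚ) * e v i ≤ b * e w i :=
      calc (a : ℚ) * e v i ≤ q * b * e v i := by gcongr
        _ = b * (q * e v i) := by ring
        _ ≤ b * e w i := by gcongr; exact hle i
    exact_mod_cast this

theorem isRatFloor_chart_basis [Nontrivial (Fin k)] {v : S} (hv : ∀ i, 0 < e v i) (j : Fin k) :
    IsRatFloor (v : D) (e.symm (Pi.single j 1) : S) 0 := by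
  obtain ⟨i, hij⟩ := exists_ne j
  refine isRatFloor_of_chart he hv (fun i => ?_) ⟨i, by simp [hij]⟩
  simp only [zero_mul, AddEquiv.apply_symm_apply, Pi.single_apply]
  split_ifs <;> simp

theorem isRatFloor_neg_chart_basis {v : S} (hv : ∀ i, 0 < e v i) (j : Fin k) :
    IsRatFloor (v : D) (-((e.symm (Pi.single j 1) : S) : D)) (-1 / e v j) := by
  rw [← AddSubgroup.coe_neg]
  have hvj : (0 : ℚ) < e v j := by exact_mod_cast hv j
  refine isRatFloor_of_chart he hv (fun i => ?_) ⟨j, by simp [hvj.ne']⟩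
  rcases eq_or_ne i j with rfl | hij
  · simp [hvj.ne']
  · have hvi : (0 : ℚ) ≤ e v i := by exact_mod_cast (hv i).le
    simp only [map_neg, AddEquiv.apply_symm_apply, Pi.neg_apply, Pi.single_eq_of_ne hij,
      neg_zero, Int.cast_zero]
    exact mul_nonpos_of_nonpos_of_nonneg (div_nonpos_of_nonpos_of_nonneg (by norm_num) hvj.le) hvi

end Chart

namespace IsDimensionGroup

variable (h : IsDimensionGroup D u)
include h

theorem isOrderedAddMonoid : IsOrderedAddMonoid D where
  add_le_add_left a b hab c := h.add_le_add a b c hab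

theorem unit_ne_zero [Nontrivial D] : u ≠ 0 := by
  have := h.isOrderedAddMonoid
  obtain ⟨x, hx⟩ := exists_ne (0 : D)
  intro hu
  obtain ⟨n, -, hn⟩ := h.unit_arch x
  obtain ⟨m, -, hm⟩ := h.unit_arch (-x)
  rw [hu, zsmul_zero] at hn hm
  exact hx (le_antisymm hn (neg_nonpos.1 hm))

theorem zsmul_le_zsmul_iff {b : ℤ} (hb : 0 < b) {x y : D} : b • x ≤ b • y ↔ x ≤ y := by
  classical
  obtain ⟨k, S, e, hmem, he⟩ := h.locallyZ {x, y}
  have key := zsmul_le_zsmul_iff_of_chart he ⟨x, hmem x (by simp)⟩ ⟨y, hmem y (by simp)⟩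
  calc b • x ≤ b • y ↔ (1 : ℤ) • x ≤ (1 : ℤ) • y := by
        rw [key, key]
        simp only [mul_le_mul_iff_right₀ hb, one_mul]
    _ ↔ x ≤ y := by rw [one_zsmul, one_zsmul]

theorem zsmul_right_injective {b : ℤ} (hb : 0 < b) : Function.Injective fun x : D => b • x :=
  fun _ _ hxy =>
    le_antisymm ((h.zsmul_le_zsmul_iff hb).1 hxy.le) ((h.zsmul_le_zsmul_iff hb).1 hxy.ge)

theorem chart_unit_pos {S : AddSubgroup D} {k : ℕ} {e : S ≃+ (Fin k → ℤ)}
    (he : ∀ a b : S, a ≤ b ↔ e a ≤ e b) (huS : u ∈ S) (i : Fin k) : 0 < e ⟨u, huS⟩ i := by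
  obtain ⟨n, -, hn⟩ := h.unit_arch (e.symm (Pi.single i 1) : S)
  rw [← one_zsmul ((e.symm (Pi.single i 1) : S) : D)] at hn
  have := (zsmul_le_zsmul_iff_of_chart he _ ⟨u, huS⟩ 1 n).1 hn i
  simp only [AddEquiv.apply_symm_apply, Pi.single_eq_same, mul_one] at this
  exact pos_of_mul_pos_right (a := (n : ℤ)) (by omega) (by positivity)

theorem exists_isRatFloor (hu : u ≠ 0) (z : D) : ∃ q, IsRatFloor u z q := by
  classical
  obtain ⟨k, S, e, hmem, he⟩ := h.locallyZ {z, u}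
  have huS : u ∈ S := hmem u (by simp)
  have hzS : z ∈ S := hmem z (by simp)
  obtain ⟨i₀⟩ : Nonempty (Fin k) := by
    by_contra hk
    rw [not_nonempty_iff] at hk
    exact hu (congrArg Subtype.val (e.injective (Subsingleton.elim _ _) :
      (⟨u, huS⟩ : S) = 0))
  have hpos := h.chart_unit_pos he huS
  have hposq (i : Fin k) : (0 : ℚ) < e ⟨u, huS⟩ i := by exact_mod_cast hpos i
  let ratio (i : Fin k) : ℚ := e ⟨z, hzS⟩ i / e ⟨u, huS⟩ i
  have hne : (Finset.univ : Finset (Fin k)).Nonempty := ⟨i₀, Finset.mem_univ _⟩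
  obtain ⟨j, -, hj⟩ := Finset.exists_mem_eq_inf' hne ratio
  refine ⟨Finset.univ.inf' hne ratio,
    isRatFloor_of_chart (v := ⟨u, huS⟩) (w := ⟨z, hzS⟩) he hpos
      (fun i => (le_div_iff₀ (hposq i)).1 (Finset.inf'_le ratio (Finset.mem_univ i))) ⟨j, ?_⟩⟩
  rw [hj, div_mul_cancel₀ _ (hposq j).ne']

theorem _root_.IsRatFloor.add_of_zsmul_eq {z y : D} {q : ℚ} {a b : ℤ}
    (hq : IsRatFloor u z q) (hb : 0 < b) (hy : b • y = a • u) :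
    IsRatFloor u (z + y) (q + a / b) := by
  have := h.isOrderedAddMonoid
  intro a₁ b₁ hb₁
  have hbq : (0 : ℚ) < b := by exact_mod_cast hb
  have hb₁q : (0 : ℚ) < b₁ := by exact_mod_cast hb₁
  calc a₁ • u ≤ b₁ • (z + y) ↔ b • a₁ • u ≤ b • b₁ • (z + y) := (h.zsmul_le_zsmul_iff hb).symm
    _ ↔ (b * a₁ - b₁ * a) • u ≤ (b * b₁) • z := by
        rw [← sub_nonneg, ← sub_nonneg (b := (b * a₁ - b₁ * a) • u)]
        convert Iff.rfl using 2
        linear_combination (norm := module) -(b₁ • hy)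
    _ ↔ ((b * a₁ - b₁ * a : ℤ) : ℚ) / (b * b₁ : ℤ) ≤ q := hq _ _ (mul_pos hb hb₁)
    _ ↔ (a₁ : ℚ) / b₁ ≤ q + a / b := by
        rw [← sub_le_iff_le_add]
        convert Iff.rfl using 2
        push_cast
        field_simp

variable {Θ : D ≃+ D} (hΘ : ∀ x y : D, x ≤ y ↔ Θ x ≤ Θ y)
include hΘ

theorem _root_.IsRatFloor.map {a' b' : ℤ} (ha' : 0 < a') (hb' : 0 < b')
    (hΘu : b' • Θ u = a' • u) {z : D} {q : ℚ} (hq : IsRatFloor u z q) :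
    IsRatFloor u (Θ z) (q * a' / b') := by
  intro a b hb
  have ha'q : (0 : ℚ) < a' := by exact_mod_cast ha'
  have hb'q : (0 : ℚ) < b' := by exact_mod_cast hb'
  have hbq : (0 : ℚ) < b := by exact_mod_cast hb
  calc a • u ≤ b • Θ z ↔ a' • a • u ≤ a' • b • Θ z := (h.zsmul_le_zsmul_iff ha').symm
    _ ↔ Θ ((a * b') • u) ≤ Θ ((a' * b) • z) := by
        rw [map_zsmul, map_zsmul, mul_zsmul, hΘu, ← mul_zsmul, ← mul_zsmul, ← mul_zsmul,
          mul_comm a a']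
    _ ↔ (a * b') • u ≤ (a' * b) • z := (hΘ _ _).symm
    _ ↔ ((a * b' : ℤ) : ℚ) / (a' * b : ℤ) ≤ q := hq _ _ (mul_pos ha' hb)
    _ ↔ (a : ℚ) / b ≤ q * a' / b' := by
        rw [div_le_iff₀ (by push_cast; positivity), div_le_div_iff₀ hbq hb'q]
        push_cast
        constructor <;> intro hh <;> nlinarith

theorem _root_.IsRatFloor.map_of_map_unit_eq (hΘu : Θ u = u) {z : D} {q : ℚ}
    (hq : IsRatFloor u z q) : IsRatFloor u (Θ z) q := by
  simpa using hq.map h hΘ one_pos one_pos (by simpa using hΘu)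

theorem exists_zsmul_map_unit_eq (hu : u ≠ 0) (hΘu : Θ u ∈ rationalMultiples u) :
    ∃ a' b' : ℤ, 0 < a' ∧ 0 < b' ∧ b' • Θ u = a' • u := by
  have := h.isOrderedAddMonoid
  obtain ⟨a', b', hb', hab⟩ := hΘu
  refine ⟨a', b', ?_, hb', hab⟩
  by_contra! ha'
  have hΘu0 : 0 ≤ Θ u := by simpa using (hΘ 0 u).1 h.unit_nonneg
  have hle : a' • u ≤ 0 := by
    simpa using neg_nonpos.2 (zsmul_nonneg h.unit_nonneg (neg_nonneg.2 ha'))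
  have : b' • Θ u = b' • 0 := by
    rw [zsmul_zero]
    exact le_antisymm (hab ▸ hle) (zsmul_nonneg hΘu0 hb'.le)
  exact hu (Θ.map_eq_zero_iff.1 (h.zsmul_right_injective hb' this))

theorem floor_width_mul_scale {a' b' : ℤ} (ha' : 0 < a') (hb' : 0 < b')
    (hΘu : b' • Θ u = a' • u) {z : D}
    (hz : Θ z - z ∈ rationalMultiples u ∨ Θ z + z ∈ rationalMultiples u) {q₁ q₂ : ℚ}
    (hq₁ : IsRatFloor u z q₁) (hq₂ : IsRatFloor u (-z) q₂) :
    (q₁ + q₂) * a' / b' = q₁ + q₂ := by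
  have hΘz := hq₁.map h hΘ ha' hb' hΘu
  have hΘnz := hq₂.map h hΘ ha' hb' hΘu
  rw [map_neg] at hΘnz
  rw [add_mul, add_div]
  rcases hz with ⟨a, b, hb, hab⟩ | ⟨a, b, hb, hab⟩
  · have e₁ := hq₁.add_of_zsmul_eq h hb hab
    have e₂ := hq₂.add_of_zsmul_eq h hb (by rw [zsmul_neg, hab, ← neg_zsmul])
    rw [add_sub_cancel] at e₁
    rw [show -z + -(Θ z - z) = -Θ z by abel] at e₂
    rw [hΘz.unique e₁, hΘnz.unique e₂]
    push_cast
    ring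
  · have e₁ := hq₂.add_of_zsmul_eq h hb hab
    have e₂ := hq₁.add_of_zsmul_eq h hb (by rw [zsmul_neg, hab, ← neg_zsmul])
    rw [show -z + (Θ z + z) = Θ z by abel] at e₁
    rw [show z + -(Θ z + z) = -Θ z by abel] at e₂
    rw [hΘz.unique e₁, hΘnz.unique e₂]
    push_cast
    ring

theorem map_unit_eq_self (hu : u ≠ 0)
    (hpm : ∀ z, Θ z - z ∈ rationalMultiples u ∨ Θ z + z ∈ rationalMultiples u)
    (hR : ∃ z, z ∉ rationalMultiples u) : Θ u = u := by
  have huR : u ∈ rationalMultiples u := ⟨1, 1, one_pos, rfl⟩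
  have hΘuR : Θ u ∈ rationalMultiples u := by
    rcases hpm u with hsub | hadd
    · simpa using add_mem hsub huR
    · simpa using sub_mem hadd huR
  obtain ⟨a', b', ha', hb', hΘu⟩ := h.exists_zsmul_map_unit_eq hΘ hu hΘuR
  obtain ⟨z, hz⟩ := hR
  obtain ⟨q₁, hq₁⟩ := h.exists_isRatFloor hu z
  obtain ⟨q₂, hq₂⟩ := h.exists_isRatFloor hu (-z)
  have := h.isOrderedAddMonoid
  have hwidth : q₁ + q₂ ≠ 0 := fun h0 =>
    hz (hq₁.mem_rationalMultiples (by rwa [← eq_neg_of_add_eq_zero_right h0]))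
  have hscale := h.floor_width_mul_scale hΘ ha' hb' hΘu (hpm z) hq₁ hq₂
  rw [mul_div_assoc, mul_eq_left₀ hwidth, div_eq_one_iff_eq (by positivity)] at hscale
  have hab : a' = b' := by exact_mod_cast hscale
  exact h.zsmul_right_injective hb' (by simp only [hΘu, hab])

theorem map_eq_self_of_sub_mem (hu : u ≠ 0) (hΘu : Θ u = u)
    (hsub : ∀ z, Θ z - z ∈ rationalMultiples u) (z : D) : Θ z = z := by
  obtain ⟨a, b, hb, hab⟩ := hsub z
  obtain ⟨q, hq⟩ := h.exists_isRatFloor hu z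
  have h₂ := hq.add_of_zsmul_eq h hb hab
  rw [add_sub_cancel] at h₂
  have ha : a = 0 := by
    simpa [hb.ne'] using (hq.map_of_map_unit_eq h hΘ hΘu).unique h₂
  rw [ha, zero_zsmul, ← zsmul_zero b] at hab
  exact sub_eq_zero.1 (h.zsmul_right_injective hb hab)

theorem div_eq_floor_sub_floor_neg (hΘu : Θ u = u) {z : D} {q₁ q₂ : ℚ}
    (hq₁ : IsRatFloor u z q₁) (hq₂ : IsRatFloor u (-z) q₂) {a b : ℤ} (hb : 0 < b)
    (hab : b • (Θ z + z) = a • u) : (a : ℚ) / b = q₁ - q₂ := by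
  have h₂ := hq₂.add_of_zsmul_eq h hb hab
  rw [show -z + (Θ z + z) = Θ z by abel] at h₂
  linarith [(hq₁.map_of_map_unit_eq h hΘ hΘu).unique h₂]

theorem chart_rank_le_two (hΘu : Θ u = u) (hadd : ∀ z, Θ z + z ∈ rationalMultiples u)
    {S : AddSubgroup D} {k : ℕ} {e : S ≃+ (Fin k → ℤ)} (he : ∀ a b : S, a ≤ b ↔ e a ≤ e b)
    (huS : u ∈ S) : k ≤ 2 := by
  by_contra! hk
  have : Nontrivial (Fin k) := Fin.nontrivial_iff_two_le.2 hk.le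
  set U := e ⟨u, huS⟩
  have hU := h.chart_unit_pos he huS
  let ε (j : Fin k) : D := (e.symm (Pi.single j 1) : S)
  have hunit (j : Fin k) : U j • (Θ (ε j) + ε j) = u := by
    obtain ⟨a, b, hb, hab⟩ := hadd (ε j)
    have hUj : (U j : ℚ) ≠ 0 := by exact_mod_cast (hU j).ne'
    have hab' : a * U j = b := by
      have := h.div_eq_floor_sub_floor_neg hΘ hΘu (isRatFloor_chart_basis he hU j)
        (isRatFloor_neg_chart_basis he hU j) hb hab
      rw [zero_sub, neg_div, neg_neg, div_eq_div_iff (by positivity) hUj] at this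
      exact_mod_cast this.trans (one_mul _)
    apply h.zsmul_right_injective hb
    show b • U j • (Θ (ε j) + ε j) = b • u
    rw [← mul_zsmul, mul_comm, mul_zsmul, hab, ← mul_zsmul, mul_comm, hab']
  have hk2 : (k : ℤ) • u = (2 : ℤ) • u :=
    calc (k : ℤ) • u = ∑ j, U j • (Θ (ε j) + ε j) := by simp [hunit]
      _ = Θ (∑ j, U j • ε j) + ∑ j, U j • ε j := by
        simp [map_sum, Finset.sum_add_distrib, smul_add]
      _ = (2 : ℤ) • u := by
        rw [← coe_eq_sum_chart_basis e ⟨u, huS⟩, hΘu, two_zsmul]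
  have := (zsmul_le_zsmul_iff_of_chart he ⟨u, huS⟩ ⟨u, huS⟩ k 2).1 hk2.le ⟨0, by omega⟩
  nlinarith [hU ⟨0, by omega⟩]

theorem map_eq_self_of_sub_mem_or_add_mem {ι : Type*} [Fintype ι] {f : ι → D}
    (hf : LinearIndependent ℤ f) (hι : 3 ≤ Fintype.card ι)
    (hmod : (∀ z, Θ z - z ∈ rationalMultiples u) ∨ ∀ z, Θ z + z ∈ rationalMultiples u)
    (z : D) : Θ z = z := by
  have : Nontrivial ι := Fintype.one_lt_card_iff_nontrivial.1 (by omega)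
  obtain ⟨i⟩ := (inferInstance : Nonempty ι)
  have : Nontrivial D := ⟨⟨f i, 0, hf.ne_zero i⟩⟩
  have hu : u ≠ 0 := h.unit_ne_zero
  have hΘu : Θ u = u := h.map_unit_eq_self hΘ hu (fun z => hmod.imp (· z) (· z))
    (exists_not_mem_rationalMultiples hf u)
  refine hmod.elim (fun hsub => h.map_eq_self_of_sub_mem hΘ hu hΘu hsub z) fun hadd => ?_
  classical
  obtain ⟨k, S, e, hmem, he⟩ := h.locallyZ (insert u (Finset.univ.image f))
  have hk3 := card_le_of_linearIndependent hf e fun i => hmem _ (by simp)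
  have hk2 := h.chart_rank_le_two hΘ hΘu hadd he (hmem u (by simp))
  omega

end IsDimensionGroup

end Order

end

/-- Let `(D, ≤, u)` be a dimension group of rank at least 3 whose
maximal divisible subgroup is `ℚu`, with a group `H` acting by order-preserving
automorphisms such that the induced automorphisms of `D ⧸ ℚu` together with `-1`
exhaust `Aut (D ⧸ ℚu)` uniquely (i.e. `Aut (D ⧸ ℚu) ≅ ℤ/2 × H`).  Then every
order-preserving automorphism of `D` is the action of a unique element of `H`. -/
theorem stmt19 {D : Type*} [AddCommGroup D] [PartialOrder D] (u : D)
    (h : IsDimensionGroup D u)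
    (hrank : ∃ f : Fin 3 → D, LinearIndependent ℤ f)
    (Q : AddSubgroup D)
    (hQ : ∀ x : D, x ∈ Q ↔ ∃ a b : ℤ, 0 < b ∧ b • x = a • u)
    (hdiv : DivisibleSubgroup Q)
    (hmax : ∀ Q' : AddSubgroup D, DivisibleSubgroup Q' → Q' ≤ Q)
    {H : Type*} [Group H] (ρ : H →* AddAut D)
    (hρord : ∀ (g : H) (x y : D), x ≤ y ↔ ρ g x ≤ ρ g y)
    (bar : H →* AddAut (D ⧸ Q))
    (hbar : ∀ (g : H) (x : D),
      bar g (QuotientAddGroup.mk x) = QuotientAddGroup.mk (ρ g x))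
    (hfull : ∀ ψ : AddAut (D ⧸ Q), ∃! p : Bool × H,
      ∀ x : D ⧸ Q, ψ x = (if p.1 then -(bar p.2 x) else bar p.2 x)) :
    ∀ Φ : AddAut D, (∀ x y : D, x ≤ y ↔ Φ x ≤ Φ y) →
      ∃! g : H, Φ = ρ g := by
  intro Φ hΦ
  obtain rfl : Q = rationalMultiples u := AddSubgroup.ext hQ
  obtain ⟨f, hf⟩ := hrank
  obtain ⟨⟨ε, g⟩, hψ, huniq⟩ := hfull (QuotientAddGroup.congr _ _ Φ (hdiv.map_eq_of_maximal hmax Φ))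
  let Θ : D ≃+ D := Φ.trans (ρ g).symm
  have hΘ (x y : D) : x ≤ y ↔ Θ x ≤ Θ y := by
    rw [hΦ, hρord g (Θ x)]
    simp [Θ]
  have hmod : (∀ z, Θ z - z ∈ rationalMultiples u) ∨ ∀ z, Θ z + z ∈ rationalMultiples u := by
    cases ε <;> [left; right] <;> intro z <;>
    · have hz : (Φ z : D ⧸ rationalMultiples u) = _ := hψ z
      simp only [Bool.false_eq_true, if_true, if_false, hbar, ← QuotientAddGroup.mk_neg] at hz
      simpa [Θ] using hdiv.apply_mem_of_maximal hmax (ρ g).symm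
        (QuotientAddGroup.eq_iff_sub_mem.1 hz)
  have hΦg : Φ = ρ g := AddEquiv.ext fun z => by
    simpa [Θ] using congrArg (ρ g) (h.map_eq_self_of_sub_mem_or_add_mem hΘ hf (by simp) hmod z)
  refine ⟨g, hΦg, fun g' hg' => congrArg Prod.snd (huniq (false, g') fun x => ?_)⟩
  induction x using QuotientAddGroup.induction_on with | H z => ?_
  simp only [Bool.false_eq_true, if_false, hbar, ← hg']
  rfl
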